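/- Connes' assignment of a cyclic cochain to a group cochain is well defined on cocycles: if c: Γ^{k+1} → ℂ is a Γ-invariant, antisymmetric group k-cocycle, then τ_c defined by τ_c(γ₀,…,γ_k) = c(1, γ₀, γ₀γ₁, …, γ₀⋯γ_{k−1}) when γ₀⋯γ_k = 1 and τ_c(γ₀,…,γ_k) = 0 otherwise, extended multilinearly to the group algebra ℂΓ, is a cyclic k-cochain: it satisfies the cyclicity condition τ_c(γ₁,…,γ_k,γ₀) = (−1)^k τ_c(γ₀,…,γ_k). -/

import Mathlib

/-! Connes' cyclic cochain `τ_c` associated to a Γ-invariant antisymmetric group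
`k`-cocycle `c`: `τ_c(γ₀,…,γ_k) = c(1, γ₀, γ₀γ₁, …, γ₀⋯γ_{k−1})` if
`γ₀⋯γ_k = 1` and `0` otherwise.  Its multilinear extension to `ℂΓ` is determined
by its values on tuples of group elements, so cyclicity is stated on such
tuples: `τ_c(γ₁,…,γ_k,γ₀) = (−1)^k τ_c(γ₀,…,γ_k)`. -/

/-- Connes' cochain `τ_c` on tuples of group elements.  Note that
`fun i => ((List.ofFn γ).take i).prod` is the tuple `(1, γ₀, γ₀γ₁, …, γ₀⋯γ_{k−1})`. -/
noncomputable def connesCochain {Γ : Type*} [Group Γ] [DecidableEq Γ] (k : ℕ)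
    (c : (Fin (k + 1) → Γ) → ℂ) : (Fin (k + 1) → Γ) → ℂ :=
  fun γ => if (List.ofFn γ).prod = 1
    then c (fun i => ((List.ofFn γ).take (i : ℕ)).prod) else 0

/-- The group-cohomology coboundary on homogeneous cochains (ℂ-valued). -/
noncomputable def groupCoboundary {Γ : Type*} (k : ℕ) (c : (Fin (k + 1) → Γ) → ℂ) :
    (Fin (k + 2) → Γ) → ℂ :=
  fun g => ∑ i : Fin (k + 2), (-1 : ℂ) ^ (i : ℕ) * c (fun j => g (i.succAbove j))

/-! The partial products `(1, γ₁, γ₁γ₂, …, γ₁⋯γ_k)` of the rotated tuple are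
`γ₀⁻¹ (γ₀, γ₀γ₁, …, γ₀⋯γ_k)`. When `γ₀⋯γ_k = 1`, the last entry equals the first partial
product `1` of `γ`, so this is the left translate by `γ₀⁻¹` of the partial-product tuple of `γ`
permuted by a `(k+1)`-cycle: invariance removes the translation and antisymmetry contributes
the sign `(-1)^k` of the cycle. The condition `γ₀⋯γ_k = 1` survives rotation because the
product only changes by conjugation with `γ₀`. -/

open Fin

theorem Fin.partialProd_last {M : Type*} [Monoid M] {n : ℕ} (f : Fin n → M) :
    partialProd f (last n) = (List.ofFn f).prod := by
  simp [partialProd, List.take_of_length_le]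

theorem Fin.init_comp_finRotate {α : Type*} {n : ℕ} (f : Fin (n + 1) → α) :
    init (f ∘ finRotate (n + 1)) = tail f := by
  funext i
  simp [init, tail]

section PartialProd

variable {G : Type*} [Group G] {n : ℕ}

theorem Fin.partialProd_comp_finRotate_castSucc (f : Fin (n + 1) → G) (i : Fin (n + 1)) :
    partialProd (f ∘ finRotate (n + 1)) i.castSucc = (f 0)⁻¹ * partialProd f i.succ := by
  rw [← partialProd_init, init_comp_finRotate, partialProd_succ', inv_mul_cancel_left]

theorem Fin.partialProd_comp_finRotate_last (f : Fin (n + 1) → G) :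
    partialProd (f ∘ finRotate (n + 1)) (last (n + 1)) =
      (f 0)⁻¹ * partialProd f (last (n + 1)) * f 0 := by
  rw [← succ_last, partialProd_succ, partialProd_comp_finRotate_castSucc, succ_last,
    Function.comp_apply, finRotate_last]

theorem Fin.partialProd_comp_finRotate_castSucc_of_last_eq_one {f : Fin (n + 1) → G}
    (hf : partialProd f (last (n + 1)) = 1) (i : Fin (n + 1)) :
    partialProd (f ∘ finRotate (n + 1)) i.castSucc =
      (f 0)⁻¹ * partialProd f (finRotate (n + 1) i).castSucc := by
  rw [partialProd_comp_finRotate_castSucc]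
  congr 1
  induction i using lastCases with
  | last => rw [finRotate_last, succ_last, hf, castSucc_zero, partialProd_zero]
  | cast j => rw [finRotate_apply, coeSucc_eq_succ]; rfl

end PartialProd

theorem apply_comp_finRotate_of_invariant_of_antisymm {G : Type*} [Group G] {n : ℕ}
    {c : (Fin (n + 1) → G) → ℂ}
    (hinv : ∀ (g : G) (x : Fin (n + 1) → G), c (fun j => g * x j) = c x)
    (hanti : ∀ (σ : Equiv.Perm (Fin (n + 1))) (x : Fin (n + 1) → G),
      c (x ∘ σ) = ((Equiv.Perm.sign σ : ℤ) : ℂ) * c x)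
    (g : G) (x : Fin (n + 1) → G) :
    c (fun i => g * x (finRotate (n + 1) i)) = (-1) ^ n * c x := by
  refine (hinv g (x ∘ finRotate (n + 1))).trans ?_
  rw [hanti, sign_finRotate]
  push_cast
  rfl

theorem connesCochain_eq_ite {Γ : Type*} [Group Γ] [DecidableEq Γ] (k : ℕ)
    (c : (Fin (k + 1) → Γ) → ℂ) (γ : Fin (k + 1) → Γ) :
    connesCochain k c γ =
      if partialProd γ (last (k + 1)) = 1 then c fun i => partialProd γ i.castSucc else 0 := by
  rw [partialProd_last]
  rfl

theorem connesCochain_cyclic_general {Γ : Type*} [Group Γ] [DecidableEq Γ] (k : ℕ)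
    (c : (Fin (k + 1) → Γ) → ℂ)
    (hinv : ∀ (g : Γ) (x : Fin (k + 1) → Γ), c (fun j => g * x j) = c x)
    (hanti : ∀ (σ : Equiv.Perm (Fin (k + 1))) (x : Fin (k + 1) → Γ),
      c (x ∘ σ) = ((Equiv.Perm.sign σ : ℤ) : ℂ) * c x)
    (γ : Fin (k + 1) → Γ) :
    connesCochain k c (fun i => γ (i + 1)) = (-1 : ℂ) ^ k * connesCochain k c γ := by
  have hrot : (fun i => γ (i + 1)) = γ ∘ finRotate (k + 1) := funext fun i => by simp
  have hprod : partialProd (γ ∘ finRotate (k + 1)) (last (k + 1)) = 1 ↔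
      partialProd γ (last (k + 1)) = 1 := by
    rw [partialProd_comp_finRotate_last, mul_assoc, inv_mul_eq_one, eq_comm, mul_eq_right]
  rw [hrot, connesCochain_eq_ite, connesCochain_eq_ite]
  by_cases h : partialProd γ (last (k + 1)) = 1
  · simp only [partialProd_comp_finRotate_castSucc_of_last_eq_one h, hprod.mpr h, h, if_true]
    exact apply_comp_finRotate_of_invariant_of_antisymm hinv hanti _
      fun i => partialProd γ i.castSucc
  · rw [if_neg (mt hprod.mp h), if_neg h, mul_zero]

/-- if `c` is a Γ-invariant antisymmetric group `k`-cocycle, then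
`τ_c` is cyclic: `τ_c(γ₁,…,γ_k,γ₀) = (−1)^k τ_c(γ₀,…,γ_k)`. -/
theorem connesCochain_cyclic {Γ : Type*} [Group Γ] [DecidableEq Γ] (k : ℕ)
    (c : (Fin (k + 1) → Γ) → ℂ)
    (hinv : ∀ (g : Γ) (x : Fin (k + 1) → Γ), c (fun j => g * x j) = c x)
    (hanti : ∀ (σ : Equiv.Perm (Fin (k + 1))) (x : Fin (k + 1) → Γ),
      c (x ∘ σ) = ((Equiv.Perm.sign σ : ℤ) : ℂ) * c x)
    (hcocycle : groupCoboundary k c = fun _ => 0)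
    (γ : Fin (k + 1) → Γ) :
    connesCochain k c (fun i => γ (i + 1)) = (-1 : ℂ) ^ k * connesCochain k c γ :=
  connesCochain_cyclic_general k c hinv hanti γ
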